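/- Let 0 < λ < 1, 0 ≤ k ≤ 1 with λ² > 2 - 1/k² (equivalently (1-λ²)k²/(1-k²) < 1 when k < 1), ν > -1 with (1-λ²)|ν|/(ν+1) < 1, and additionally 1/2 ≤ k² < 1 and (ν+1)k²/(|ν|(1-k²)) > 1. Then for every positive integer N the remainder R_{2,N} = -(√(1-λ²)/√(1-k²)) Σ_{m=N}^{∞} ((1-λ²)^m/(2m+1)) Σ_{n=0}^{m} (ν^{m-n}/(1+ν)^{m-n+1}) ₂F₁(-n,1/2;1;1/(1-k²)) satisfies |R_{2,N}| ≤ ((1-λ²)^{N+1/2}/(2N+1)) (k²/(1-k²))^{N+1/2} · (1/((1+ν)k)) · [1-(1-λ²)k²/(1-k²)]^{-1} · [1-|ν|(1-k²)/((ν+1)k²)]^{-1}. -/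

import Mathlib

/-!
Expanding about `x = 1` (a Chu–Vandermonde computation: iterated forward differences of
`j ↦ (a)_j / j!`) gives
`₂F₁(-n, a; 1; 1 + c) = ∑ j, (-1)^j (a)_j/j! (1-a)_{n-j}/(n-j)! c^j`.
For `0 ≤ a ≤ 1` these coefficients are nonnegative, and evaluating at `c = -1` shows that they
sum to `1`; hence `|₂F₁(-n, a; 1; 1 + c)| ≤ c^n` for `c ≥ 1`. With `a = 1/2` and
`c = k²/(1-k²)`, the inner sum is then dominated by `c^M/(ν+1)` times a geometric series in
`|ν|/((ν+1)c) < 1`, and the outer one by a geometric series in `(1-λ²)c < 1`.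
-/

open Finset Real

noncomputable def poch (a : ℝ) (k : ℕ) : ℝ := ∏ i ∈ Finset.range k, (a + i)

/-- Terminating hypergeometric polynomial ₂F₁(-n, 1/2; 1; x). -/
noncomputable def termF (n : ℕ) (x : ℝ) : ℝ :=
  ∑ i ∈ Finset.range (n + 1),
    poch (-(n : ℝ)) i * poch (1 / 2) i / ((Nat.factorial i) * (Nat.factorial i)) * x ^ i

@[simp] lemma poch_zero (a : ℝ) : poch a 0 = 1 := by simp [poch]

lemma poch_succ (a : ℝ) (k : ℕ) : poch a (k + 1) = poch a k * (a + k) :=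
  prod_range_succ _ _

lemma poch_nonneg {a : ℝ} (ha : 0 ≤ a) (k : ℕ) : 0 ≤ poch a k :=
  prod_nonneg fun _ _ ↦ by positivity

lemma poch_neg_natCast (n i : ℕ) : poch (-n) i = (-1) ^ i * i.factorial * n.choose i := by
  have h : poch (-n) i = (-1) ^ i * (descPochhammer ℝ i).eval (n : ℝ) := by
    rw [descPochhammer_eval_eq_prod_range, poch, pow_eq_prod_const, ← prod_mul_distrib]
    exact prod_congr rfl fun _ _ ↦ by ring
  rw [h, descPochhammer_eval_eq_descFactorial, Nat.descFactorial_eq_factorial_mul_choose]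
  push_cast; ring

noncomputable def pochCoeff (a : ℝ) (j : ℕ) : ℝ := poch a j / j.factorial

lemma pochCoeff_nonneg {a : ℝ} (ha : 0 ≤ a) (j : ℕ) : 0 ≤ pochCoeff a j :=
  div_nonneg (poch_nonneg ha j) (by positivity)

lemma fwdDiff_iter_pochCoeff (a : ℝ) (m j : ℕ) :
    (fwdDiff 1)^[m] (pochCoeff a) j =
      (-1) ^ m * poch a j * poch (1 - a) m / (j + m).factorial := by
  induction m generalizing j with
  | zero => simp [pochCoeff]
  | succ m ih =>
    rw [Function.iterate_succ_apply', fwdDiff, ih, ih, poch_succ, poch_succ,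
      show j + 1 + m = j + m + 1 by ring, ← add_assoc, Nat.factorial_succ]
    push_cast
    field_simp
    ring

lemma sum_alternating_choose_mul_pochCoeff_add (a : ℝ) (m j : ℕ) :
    ∑ l ∈ range (m + 1), (-1) ^ l * m.choose l * pochCoeff a (j + l) =
      poch a j * poch (1 - a) m / (j + m).factorial := by
  have hdiff := fwdDiff_iter_eq_sum_shift 1 (pochCoeff a) m j
  rw [fwdDiff_iter_pochCoeff, mul_assoc, mul_div_assoc] at hdiff
  have hsign : ∀ k ∈ range (m + 1), (-1) ^ k * m.choose k * pochCoeff a (j + k) =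
      (-1) ^ m * (((-1) ^ (m - k) * m.choose k : ℤ) • pochCoeff a (j + k • 1)) := by
    intro k hk
    have hpow : (-1 : ℝ) ^ m = (-1) ^ k * (-1) ^ (m - k) := by
      rw [← pow_add, Nat.add_sub_cancel' (mem_range_succ_iff.mp hk)]
    have hsq : ((-1 : ℝ) ^ (m - k)) ^ 2 = 1 := by rw [← pow_mul, mul_comm, pow_mul]; norm_num
    rw [zsmul_eq_mul, smul_eq_mul, mul_one, hpow]
    push_cast
    linear_combination (-(-1) ^ k * m.choose k * pochCoeff a (j + k)) * hsq
  rw [sum_congr rfl hsign, ← mul_sum, ← hdiff, ← mul_assoc, ← pow_add, ← two_mul, pow_mul]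
  norm_num

lemma sum_alternating_choose_mul_pochCoeff_mul_choose (a : ℝ) {n j : ℕ} (hj : j ≤ n) :
    ∑ i ∈ range (n + 1), (-1) ^ i * n.choose i * pochCoeff a i * i.choose j =
      (-1) ^ j * pochCoeff a j * pochCoeff (1 - a) (n - j) := by
  have hsplit : n + 1 = j + (n - j + 1) := by omega
  have hlow : ∀ i ∈ range j, (-1 : ℝ) ^ i * n.choose i * pochCoeff a i * i.choose j = 0 :=
    fun i hi ↦ by simp [Nat.choose_eq_zero_of_lt (mem_range.mp hi)]
  have hhigh : ∀ l ∈ range (n - j + 1),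
      (-1 : ℝ) ^ (j + l) * n.choose (j + l) * pochCoeff a (j + l) * (j + l).choose j =
        (-1) ^ j * n.choose j * ((-1) ^ l * (n - j).choose l * pochCoeff a (j + l)) := by
    intro l _
    have hchoose := Nat.choose_mul (n := n) (k := j + l) (s := j) (by omega)
    rw [Nat.add_sub_cancel_left] at hchoose
    have hcast : (n.choose (j + l) : ℝ) * (j + l).choose j = n.choose j * (n - j).choose l := by
      exact_mod_cast hchoose
    rw [pow_add]
    linear_combination ((-1) ^ j * (-1) ^ l * pochCoeff a (j + l)) * hcast
  rw [hsplit, sum_range_add, sum_eq_zero hlow, zero_add, sum_congr rfl hhigh, ← mul_sum,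
    sum_alternating_choose_mul_pochCoeff_add, Nat.add_sub_cancel' hj, Nat.cast_choose ℝ hj,
    pochCoeff, pochCoeff]
  field_simp

/-- `₂F₁(-n, a; 1; x)`, written with `(-n)_i / i! = (-1)^i C(n, i)`. -/
noncomputable def terminatingHyp (a : ℝ) (n : ℕ) (x : ℝ) : ℝ :=
  ∑ i ∈ range (n + 1), (-1) ^ i * n.choose i * pochCoeff a i * x ^ i

lemma one_add_pow_eq_sum_range {i n : ℕ} (hi : i ≤ n) (c : ℝ) :
    (1 + c) ^ i = ∑ j ∈ range (n + 1), (i.choose j : ℝ) * c ^ j := by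
  rw [add_comm, add_pow, ← sum_range_add_sum_Ico _ (by omega : i + 1 ≤ n + 1)]
  have hzero : ∀ j ∈ Ico (i + 1) (n + 1), (i.choose j : ℝ) * c ^ j = 0 := fun j hj ↦ by
    simp [Nat.choose_eq_zero_of_lt (by simp at hj; omega : i < j)]
  rw [sum_eq_zero hzero, add_zero]
  exact sum_congr rfl fun j _ ↦ by ring

lemma terminatingHyp_one_add (a : ℝ) (n : ℕ) (c : ℝ) :
    terminatingHyp a n (1 + c) =
      ∑ j ∈ range (n + 1), (-1) ^ j * pochCoeff a j * pochCoeff (1 - a) (n - j) * c ^ j := by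
  have hexpand : ∀ i ∈ range (n + 1), (-1) ^ i * n.choose i * pochCoeff a i * (1 + c) ^ i =
      ∑ j ∈ range (n + 1), (-1) ^ i * n.choose i * pochCoeff a i * i.choose j * c ^ j := by
    intro i hi
    rw [one_add_pow_eq_sum_range (mem_range_succ_iff.mp hi), mul_sum]
    exact sum_congr rfl fun j _ ↦ by ring
  rw [terminatingHyp, sum_congr rfl hexpand, sum_comm]
  refine sum_congr rfl fun j hj ↦ ?_
  rw [← sum_mul, sum_alternating_choose_mul_pochCoeff_mul_choose a (mem_range_succ_iff.mp hj)]

lemma terminatingHyp_zero (a : ℝ) (n : ℕ) : terminatingHyp a n 0 = 1 := by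
  rw [terminatingHyp, sum_eq_single 0 (fun i _ hi ↦ by simp [hi]) (by simp)]
  simp [pochCoeff]

lemma sum_pochCoeff_mul_pochCoeff_one_sub (a : ℝ) (n : ℕ) :
    ∑ j ∈ range (n + 1), pochCoeff a j * pochCoeff (1 - a) (n - j) = 1 := by
  have h := terminatingHyp_one_add a n (-1)
  rw [add_neg_cancel, terminatingHyp_zero] at h
  refine (sum_congr rfl fun j _ ↦ ?_).trans h.symm
  have hsq : ((-1 : ℝ) ^ j) ^ 2 = 1 := by rw [← pow_mul, mul_comm, pow_mul]; norm_num
  linear_combination (-(pochCoeff a j * pochCoeff (1 - a) (n - j))) * hsq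

lemma abs_terminatingHyp_one_add_le {a c : ℝ} (ha₀ : 0 ≤ a) (ha₁ : a ≤ 1) (hc : 1 ≤ c)
    (n : ℕ) :
    |terminatingHyp a n (1 + c)| ≤ c ^ n := by
  have hterm : ∀ j ∈ range (n + 1),
      |(-1) ^ j * pochCoeff a j * pochCoeff (1 - a) (n - j) * c ^ j| ≤
        pochCoeff a j * pochCoeff (1 - a) (n - j) * c ^ n := by
    intro j hj
    have hprod :=
      mul_nonneg (pochCoeff_nonneg ha₀ j) (pochCoeff_nonneg (sub_nonneg.mpr ha₁) (n - j))
    rw [abs_mul, mul_assoc, abs_mul, abs_pow, abs_neg, abs_one, one_pow, one_mul,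
      abs_of_nonneg hprod, abs_of_nonneg (by positivity)]
    exact mul_le_mul_of_nonneg_left (pow_le_pow_right₀ hc (mem_range_succ_iff.mp hj)) hprod
  calc |terminatingHyp a n (1 + c)|
      ≤ ∑ j ∈ range (n + 1), pochCoeff a j * pochCoeff (1 - a) (n - j) * c ^ n := by
        rw [terminatingHyp_one_add]; exact (abs_sum_le_sum_abs _ _).trans (sum_le_sum hterm)
    _ = c ^ n := by rw [← sum_mul, sum_pochCoeff_mul_pochCoeff_one_sub, one_mul]

lemma termF_eq_terminatingHyp (n : ℕ) (x : ℝ) : termF n x = terminatingHyp (1 / 2) n x := by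
  refine sum_congr rfl fun i _ ↦ ?_
  rw [poch_neg_natCast, pochCoeff]
  field_simp

lemma sum_pow_sub_le_inv_one_sub {ρ : ℝ} (hρ₀ : 0 ≤ ρ) (hρ₁ : ρ < 1) (M : ℕ) :
    ∑ n ∈ range (M + 1), ρ ^ (M - n) ≤ (1 - ρ)⁻¹ := by
  have hreflect := sum_range_reflect (ρ ^ ·) (M + 1)
  simp only [Nat.add_sub_cancel] at hreflect
  rw [hreflect, range_eq_Ico, ← one_div, ← pow_zero ρ]
  exact geom_sum_Ico_le_of_lt_one hρ₀ hρ₁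

lemma abs_sum_pow_div_pow_mul_le {ν c : ℝ} (hν : -1 < ν) (hc : 0 < c)
    (hρ : |ν| / ((ν + 1) * c) < 1) {f : ℕ → ℝ} (hf : ∀ n, |f n| ≤ c ^ n) (M : ℕ) :
    |∑ n ∈ range (M + 1), ν ^ (M - n) / (1 + ν) ^ (M - n + 1) * f n| ≤
      c ^ M / (ν + 1) * (1 - |ν| / ((ν + 1) * c))⁻¹ := by
  set ρ := |ν| / ((ν + 1) * c)
  have hν₁ : 0 < ν + 1 := by linarith
  have hterm : ∀ n ∈ range (M + 1),
      |ν ^ (M - n) / (1 + ν) ^ (M - n + 1) * f n| ≤ c ^ M / (ν + 1) * ρ ^ (M - n) := by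
    intro n hn
    obtain ⟨d, rfl⟩ := Nat.exists_eq_add_of_le (mem_range_succ_iff.mp hn)
    rw [Nat.add_sub_cancel_left, abs_mul, abs_div, abs_pow, abs_pow, add_comm 1 ν,
      abs_of_pos hν₁]
    calc |ν| ^ d / (ν + 1) ^ (d + 1) * |f n| ≤ |ν| ^ d / (ν + 1) ^ (d + 1) * c ^ n :=
          mul_le_mul_of_nonneg_left (hf n) (by positivity)
      _ = c ^ (n + d) / (ν + 1) * ρ ^ d := by
          simp only [ρ]
          rw [div_pow, mul_pow, pow_add c n d, pow_succ]
          field_simp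
  calc _ ≤ ∑ n ∈ range (M + 1), c ^ M / (ν + 1) * ρ ^ (M - n) :=
        (abs_sum_le_sum_abs _ _).trans (sum_le_sum hterm)
    _ ≤ c ^ M / (ν + 1) * (1 - ρ)⁻¹ := by
        rw [← mul_sum]
        exact mul_le_mul_of_nonneg_left (sum_pow_sub_le_inv_one_sub (by positivity) hρ M)
          (by positivity)

lemma abs_tsum_pow_div_mul_le {q c K : ℝ} (hq : 0 ≤ q) (hc : 0 ≤ c) (hqc : q * c < 1)
    {S : ℕ → ℝ} (hS : ∀ M, |S M| ≤ K * c ^ M) (N : ℕ) :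
    |∑' m : ℕ, q ^ (m + N) / (2 * (m + N) + 1) * S (m + N)| ≤
      (q * c) ^ N / (2 * N + 1) * K * (1 - q * c)⁻¹ := by
  have hK : 0 ≤ K := by simpa using (abs_nonneg _).trans (hS 0)
  have hterm : ∀ m : ℕ, ‖q ^ (m + N) / (2 * (m + N) + 1) * S (m + N)‖ ≤
      (q * c) ^ N / (2 * N + 1) * K * (q * c) ^ m := by
    intro m
    rw [Real.norm_eq_abs, abs_mul, abs_of_nonneg (by positivity)]
    calc q ^ (m + N) / (2 * (m + N) + 1) * |S (m + N)|
        ≤ q ^ (m + N) / (2 * N + 1) * (K * c ^ (m + N)) := by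
          gcongr
          · linarith [(m.cast_nonneg : (0 : ℝ) ≤ m)]
          · exact hS _
      _ = (q * c) ^ N / (2 * N + 1) * K * (q * c) ^ m := by ring
  exact tsum_of_norm_bounded ((hasSum_geometric_of_lt_one (by positivity) hqc).mul_left _) hterm

lemma rpow_natCast_add_half {x : ℝ} (hx : 0 ≤ x) (N : ℕ) :
    x ^ ((N : ℝ) + 1 / 2) = x ^ N * √x := by
  rw [rpow_add' hx (by positivity), rpow_natCast, sqrt_eq_rpow]

theorem remainder_bound_region_two_case_a_general (k lam ν : ℝ)
    (hlam0 : 0 < lam) (hlam1 : lam < 1)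
    (hk0 : 0 ≤ k) (hk : 1 / 2 ≤ k ^ 2) (hk1 : k ^ 2 < 1)
    (hreg : (1 - lam ^ 2) * k ^ 2 / (1 - k ^ 2) < 1)
    (hν : -1 < ν)
    (hcase : (ν + 1) * k ^ 2 / (|ν| * (1 - k ^ 2)) > 1)
    (N : ℕ) :
    |-(Real.sqrt (1 - lam ^ 2) / Real.sqrt (1 - k ^ 2)) *
        ∑' m : ℕ, ((1 - lam ^ 2) ^ (m + N) / (2 * (m + N) + 1)) *
          ∑ n ∈ Finset.range (m + N + 1),
            ν ^ (m + N - n) / (1 + ν) ^ (m + N - n + 1) *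
              termF n (1 / (1 - k ^ 2))| ≤
      ((1 - lam ^ 2) ^ ((N : ℝ) + 1 / 2) / (2 * N + 1)) *
        (k ^ 2 / (1 - k ^ 2)) ^ ((N : ℝ) + 1 / 2) *
        (1 / ((1 + ν) * k)) *
        (1 - (1 - lam ^ 2) * k ^ 2 / (1 - k ^ 2))⁻¹ *
        (1 - |ν| * (1 - k ^ 2) / ((ν + 1) * k ^ 2))⁻¹ := by
  set q := 1 - lam ^ 2
  set c := k ^ 2 / (1 - k ^ 2) with hc_def
  have hk₂ : 0 < 1 - k ^ 2 := by linarith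
  have hq : 0 < q := by nlinarith
  have hc : 1 ≤ c := (one_le_div hk₂).mpr (by linarith)
  have hqc : q * c = q * k ^ 2 / (1 - k ^ 2) := mul_div_assoc _ _ _ |>.symm
  have hρ : |ν| * (1 - k ^ 2) / ((ν + 1) * k ^ 2) = |ν| / ((ν + 1) * c) := by
    rw [hc_def]; field_simp
  have hρ₁ : |ν| / ((ν + 1) * c) < 1 := by
    rw [← hρ, ← inv_div]; exact inv_lt_one_of_one_lt₀ hcase
  have hinner (M : ℕ) : |∑ n ∈ range (M + 1), ν ^ (M - n) / (1 + ν) ^ (M - n + 1) *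
      termF n (1 / (1 - k ^ 2))| ≤
        ((ν + 1)⁻¹ * (1 - |ν| / ((ν + 1) * c))⁻¹) * c ^ M := by
    have hx : 1 / (1 - k ^ 2) = 1 + c := by rw [hc_def]; field_simp; ring
    simp_rw [hx, termF_eq_terminatingHyp]
    exact (abs_sum_pow_div_pow_mul_le hν (by positivity) hρ₁
      (abs_terminatingHyp_one_add_le (by norm_num) (by norm_num) hc) M).trans_eq (by ring)
  have houter := abs_tsum_pow_div_mul_le hq.le (by positivity) (hqc ▸ hreg) hinner N
  have hsqrt_c : √c = k / √(1 - k ^ 2) := by rw [hc_def, sqrt_div' _ hk₂.le, sqrt_sq hk0]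
  rw [abs_mul, abs_neg, abs_of_nonneg (by positivity), ← hqc, hρ]
  refine (mul_le_mul_of_nonneg_left houter (by positivity)).trans_eq ?_
  rw [rpow_natCast_add_half hq.le, rpow_natCast_add_half (by positivity), hsqrt_c, mul_pow,
    add_comm 1 ν]
  have hk_pos : 0 < k := by nlinarith
  field_simp

theorem remainder_bound_region_two_case_a (k lam ν : ℝ)
    (hlam0 : 0 < lam) (hlam1 : lam < 1)
    (hk0 : 0 ≤ k) (hk01 : k ≤ 1) (hk : 1 / 2 ≤ k ^ 2) (hk1 : k ^ 2 < 1)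
    (hreg : (1 - lam ^ 2) * k ^ 2 / (1 - k ^ 2) < 1)
    (hν : -1 < ν) (hν2 : (1 - lam ^ 2) * |ν| / (ν + 1) < 1)
    (hcase : (ν + 1) * k ^ 2 / (|ν| * (1 - k ^ 2)) > 1)
    (N : ℕ) (hN : 1 ≤ N) :
    |-(Real.sqrt (1 - lam ^ 2) / Real.sqrt (1 - k ^ 2)) *
        ∑' m : ℕ, ((1 - lam ^ 2) ^ (m + N) / (2 * (m + N) + 1)) *
          ∑ n ∈ Finset.range (m + N + 1),
            ν ^ (m + N - n) / (1 + ν) ^ (m + N - n + 1) *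
              termF n (1 / (1 - k ^ 2))| ≤
      ((1 - lam ^ 2) ^ ((N : ℝ) + 1 / 2) / (2 * N + 1)) *
        (k ^ 2 / (1 - k ^ 2)) ^ ((N : ℝ) + 1 / 2) *
        (1 / ((1 + ν) * k)) *
        (1 - (1 - lam ^ 2) * k ^ 2 / (1 - k ^ 2))⁻¹ *
        (1 - |ν| * (1 - k ^ 2) / ((ν + 1) * k ^ 2))⁻¹ :=
  remainder_bound_region_two_case_a_general k lam ν hlam0 hlam1 hk0 hk hk1 hreg hν hcase N
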